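/- Let μ, ν be probability measures on ℝ with finite first moment with μ ≤_cx ν. Then for every lifted coupling π̂ = λ_{(0,1)}(du) δ_{F_μ^{-1}(u)}(dx) p_u(dy) between μ and ν, the infimum over all lifted martingale couplings M̂ ∈ Π̂^M(μ,ν) of the lifted adapted Wasserstein distance ÂW₁(π̂, M̂) is bounded below by ∫_{(0,1)} |∫_ℝ y p_u(dy) − F_μ^{-1}(u)| du. -/

import Mathlib

/-!
For a coupling `χ` of two copies of `λ_{(0,1)}`, at `χ`-a.e. `(u, u')` the martingale property gives
`∫ y m_{u'}(dy) = F_μ⁻¹(u')`, and two means differ by at most the `W₁` distance of the measures, so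
`|∫ y p_u(dy) - F_μ⁻¹(u)| ≤ W₁(p_u, m_{u'}) + |F_μ⁻¹(u) - F_μ⁻¹(u')|`; integrate against `χ`.

The work is in making the cost integrable (otherwise its Bochner integral is `0`), which needs
measurability of `(u, u') ↦ W₁(p_u, m_{u'})`. This comes from `W₁(η, η') = ∫ |F_η - F_{η'}|`: by
the layer-cake formula `|x - y| = λ[min x y, max x y)` every coupling costs at least
`∫ |F_η - F_{η'}|`, with equality for the comonotone coupling `(F_η⁻¹, F_{η'}⁻¹)_# λ_{(0,1)}`.
-/


open MeasureTheory ProbabilityTheory Set Filter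

noncomputable section

/-- Lebesgue measure restricted to `(0,1)`. -/
def lam01 : Measure ℝ := volume.restrict (Set.Ioo 0 1)

/-- Cumulative distribution function `F_η(x) = η((-∞, x])`. -/
def Fcdf (η : Measure ℝ) (x : ℝ) : ℝ := (η (Set.Iic x)).toReal

/-- Left limit of the cumulative distribution function, `F_η(x-) = η((-∞, x))`. -/
def FcdfL (η : Measure ℝ) (x : ℝ) : ℝ := (η (Set.Iio x)).toReal

/-- Quantile function `F_η^{-1}(u) = inf {x : F_η(x) ≥ u}`. -/
def qf (η : Measure ℝ) (u : ℝ) : ℝ := sInf {x | u ≤ Fcdf η x}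

/-- `π` is a coupling between `μ` and `ν`. -/
def IsCoupling (π : Measure (ℝ × ℝ)) (μ ν : Measure ℝ) : Prop :=
  π.map Prod.fst = μ ∧ π.map Prod.snd = ν

/-- `W_ρ^ρ(η, η')`, the Wasserstein distance of order `ρ` raised to the power `ρ`. -/
def Wr (ρ : ℝ) (η η' : Measure ℝ) : ℝ :=
  sInf {c | ∃ π : Measure (ℝ × ℝ), IsCoupling π η η' ∧ c = ∫ p, |p.1 - p.2| ^ ρ ∂π}

/-- The Wasserstein distance of order `ρ`. -/
def W (ρ : ℝ) (η η' : Measure ℝ) : ℝ := Wr ρ η η' ^ (1 / ρ)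

/-- The stochastic order `η ≤_st η'`: the quantile functions are ordered on `(0,1)`. -/
def StochOrder (η η' : Measure ℝ) : Prop := ∀ u ∈ Set.Ioo (0 : ℝ) 1, qf η u ≤ qf η' u

/-- The convex order `μ ≤_cx ν`: `∫ f dμ ≤ ∫ f dν` for every (integrable) convex `f`. -/
def ConvexOrder (μ ν : Measure ℝ) : Prop :=
  ∀ f : ℝ → ℝ, ConvexOn ℝ Set.univ f → Integrable f μ → Integrable f ν →
    ∫ x, f x ∂μ ≤ ∫ x, f x ∂ν

/-- `AW_ρ^ρ(π, π')`, the adapted Wasserstein distance of order `ρ` raised to the power `ρ`: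
the infimum over couplings `χ` between the first marginals of
`∫ (|x-x'|^ρ + W_ρ^ρ(π_x, π'_{x'})) dχ`, where `κ, κ'` are disintegration kernels of `π, π'`. -/
def AWr (ρ : ℝ) (π π' : Measure (ℝ × ℝ)) : ℝ :=
  sInf {c | ∃ (χ : Measure (ℝ × ℝ)) (κ κ' : Kernel ℝ ℝ),
      IsCoupling χ (π.map Prod.fst) (π'.map Prod.fst) ∧
      π = (π.map Prod.fst).compProd κ ∧ π' = (π'.map Prod.fst).compProd κ' ∧
      c = ∫ q, (|q.1 - q.2| ^ ρ + Wr ρ (κ q.1) (κ' q.2)) ∂χ}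

/-- The adapted Wasserstein distance of order `ρ`. -/
def AW (ρ : ℝ) (π π' : Measure (ℝ × ℝ)) : ℝ := AWr ρ π π' ^ (1 / ρ)

/-- The lifted adapted Wasserstein distance of order `ρ`, raised to the power `ρ`, between the
lifted couplings with first marginals `μ, μ'` and kernels `p, p'`. -/
def lAWr (ρ : ℝ) (μ : Measure ℝ) (p : ℝ → Measure ℝ) (μ' : Measure ℝ)
    (p' : ℝ → Measure ℝ) : ℝ :=
  sInf {c | ∃ χ : Measure (ℝ × ℝ), IsCoupling χ lam01 lam01 ∧
      c = ∫ q, (|q.1 - q.2| ^ ρ + |qf μ q.1 - qf μ' q.2| ^ ρ + Wr ρ (p q.1) (p' q.2)) ∂χ}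

/-- The probability kernel `p` encodes a lifted coupling
`λ_{(0,1)}(du) δ_{F_μ^{-1}(u)}(dx) p_u(dy)` between `μ` and `ν`. -/
def IsLiftedCoupling (μ ν : Measure ℝ) (p : ℝ → Measure ℝ) : Prop :=
  Measurable p ∧ (∀ u, IsProbabilityMeasure (p u)) ∧ lam01.bind p = ν

/-- The probability kernel `m` encodes a lifted martingale coupling between `μ` and `ν`. -/
def IsLiftedMartingale (μ ν : Measure ℝ) (m : ℝ → Measure ℝ) : Prop :=
  IsLiftedCoupling μ ν m ∧ ∀ᵐ u ∂lam01, (∫ y, y ∂(m u)) = qf μ u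

end

open MeasureTheory ProbabilityTheory Set Filter Topology
open scoped ENNReal

noncomputable section

instance : IsProbabilityMeasure lam01 := ⟨by simp [lam01]⟩

lemma lam01_Ioc {a b : ℝ} (ha : 0 ≤ a) (hb : b ≤ 1) : lam01 (Ioc a b) = ENNReal.ofReal (b - a) := by
  rw [lam01, Measure.restrict_congr_set Ioo_ae_eq_Icc,
    Measure.restrict_eq_self _ (Ioc_subset_Icc_self.trans (Icc_subset_Icc ha hb)), Real.volume_Ioc]

lemma lam01_congr_set {s t : Set ℝ} (h : ∀ u ∈ Ioo (0 : ℝ) 1, u ∈ s ↔ u ∈ t) :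
    lam01 s = lam01 t :=
  measure_congr <| (ae_restrict_mem measurableSet_Ioo).mono fun u hu => propext (h u hu)

section Quantile

variable {η : Measure ℝ} [IsProbabilityMeasure η]

lemma Fcdf_eq_cdf : Fcdf η = cdf η := funext fun x => (cdf_eq_real η x).symm

lemma qf_le_iff_le_cdf {u : ℝ} (hu : u ∈ Ioo (0 : ℝ) 1) (x : ℝ) :
    qf η u ≤ x ↔ u ≤ cdf η x := by
  set S := {y | u ≤ cdf η y}
  have hne : S.Nonempty :=
    ((tendsto_cdf_atTop η).eventually (eventually_gt_nhds hu.2)).exists.imp fun _ h => h.le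
  obtain ⟨x₀, hx₀⟩ := ((tendsto_cdf_atBot η).eventually (eventually_lt_nhds hu.1)).exists
  have hbdd : BddBelow S :=
    ⟨x₀, fun y hy => not_lt.1 fun hyx => (hx₀.trans_le hy).not_ge ((cdf η).mono hyx.le)⟩
  rw [qf, Fcdf_eq_cdf]
  refine ⟨fun h => ?_, fun h => csInf_le hbdd h⟩
  have hright : Tendsto (cdf η) (𝓝[>] sInf S) (𝓝 (cdf η (sInf S))) :=
    ((cdf η).right_continuous _).mono Ioi_subset_Ici_self
  have hmem : u ≤ cdf η (sInf S) := ge_of_tendsto hright <| eventually_nhdsWithin_of_forall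
    fun y hy => by
      obtain ⟨s, hs, hsy⟩ := exists_lt_of_csInf_lt hne hy
      exact hs.trans ((cdf η).mono hsy.le)
  exact hmem.trans ((cdf η).mono h)

lemma monotoneOn_qf : MonotoneOn (qf η) (Ioo 0 1) := fun _ hu _ hv huv =>
  (qf_le_iff_le_cdf hu _).2 (huv.trans ((qf_le_iff_le_cdf hv _).1 le_rfl))

lemma aemeasurable_qf : AEMeasurable (qf η) lam01 :=
  aemeasurable_restrict_of_monotoneOn measurableSet_Ioo monotoneOn_qf

lemma map_qf : lam01.map (qf η) = η := by
  refine Measure.ext_of_Iic _ _ fun x => ?_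
  rw [Measure.map_apply_of_aemeasurable aemeasurable_qf measurableSet_Iic]
  calc lam01 (qf η ⁻¹' Iic x) = lam01 (Ioc 0 (cdf η x)) :=
        lam01_congr_set fun u hu => by simp [qf_le_iff_le_cdf hu, hu.1]
    _ = η (Iic x) := by rw [lam01_Ioc le_rfl (cdf_le_one η x), sub_zero, ofReal_cdf]

lemma integrable_qf (h : Integrable id η) : Integrable (qf η) lam01 := by
  rw [← map_qf (η := η)] at h
  exact (integrable_map_measure aestronglyMeasurable_id aemeasurable_qf).1 h

lemma lam01_qf_le_lt_qf (η' : Measure ℝ) [IsProbabilityMeasure η'] (t : ℝ) :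
    lam01 {u | qf η u ≤ t ∧ t < qf η' u} = η (Iic t) - η' (Iic t) := by
  calc lam01 {u | qf η u ≤ t ∧ t < qf η' u} = lam01 (Ioc (cdf η' t) (cdf η t)) :=
        lam01_congr_set fun u hu => by
          simp only [mem_ofPred_eq, mem_Ioc, ← not_le, qf_le_iff_le_cdf hu, and_comm]
    _ = η (Iic t) - η' (Iic t) := by
        rw [lam01_Ioc (cdf_nonneg η' t) (cdf_le_one η t), ENNReal.ofReal_sub _ (cdf_nonneg η' t),
          ofReal_cdf, ofReal_cdf]

end Quantile

lemma measure_sublevel_tsub_le {α : Type*} [MeasurableSpace α] (π : Measure α) (f g : α → ℝ)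
    (t : ℝ) : π {a | f a ≤ t} - π {a | g a ≤ t} ≤ π {a | f a ≤ t ∧ t < g a} := by
  rw [tsub_le_iff_right]
  refine (measure_mono fun a ha => ?_).trans (measure_union_le _ _)
  by_cases h : t < g a
  exacts [Or.inl ⟨ha, h⟩, Or.inr (not_lt.1 h)]

section LayerCake

variable {α : Type*} [MeasurableSpace α] {f g : α → ℝ}

lemma measurableSet_setOf_le_lt (hf : Measurable f) (hg : Measurable g) :
    MeasurableSet {z : α × ℝ | f z.1 ≤ z.2 ∧ z.2 < g z.1} :=
  (measurableSet_le (hf.comp measurable_fst) measurable_snd).inter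
    (measurableSet_lt measurable_snd (hg.comp measurable_fst))

lemma lintegral_ofReal_sub_eq_lintegral_measure (π : Measure α) [SFinite π]
    (hf : Measurable f) (hg : Measurable g) :
    ∫⁻ a, ENNReal.ofReal (g a - f a) ∂π = ∫⁻ t, π {a | f a ≤ t ∧ t < g a} := by
  simp_rw [← Real.volume_Ico]
  exact (Measure.prod_apply (measurableSet_setOf_le_lt hf hg)).symm.trans
    (Measure.prod_apply_symm (ν := volume) (measurableSet_setOf_le_lt hf hg))

end LayerCake

lemma edist_eq_ofReal_sub_add_ofReal_sub (x y : ℝ) :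
    edist x y = ENNReal.ofReal (y - x) + ENNReal.ofReal (x - y) := by
  rw [edist_dist, Real.dist_eq]
  rcases le_total x y with h | h
  · rw [abs_of_nonpos (sub_nonpos.2 h), neg_sub, ENNReal.ofReal_of_nonpos (sub_nonpos.2 h),
      add_zero]
  · rw [abs_of_nonneg (sub_nonneg.2 h), ENNReal.ofReal_of_nonpos (sub_nonpos.2 h), zero_add]

lemma lintegral_edist_eq (π : Measure (ℝ × ℝ)) [SFinite π] :
    ∫⁻ q, edist q.1 q.2 ∂π =
      ∫⁻ t, (π {q | q.1 ≤ t ∧ t < q.2} + π {q | q.2 ≤ t ∧ t < q.1}) := by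
  simp_rw [edist_eq_ofReal_sub_add_ofReal_sub]
  rw [lintegral_add_left (by fun_prop),
    lintegral_ofReal_sub_eq_lintegral_measure π measurable_fst measurable_snd,
    lintegral_ofReal_sub_eq_lintegral_measure π measurable_snd measurable_fst]
  exact (lintegral_add_left (measurable_measure_prodMk_right
    (measurableSet_setOf_le_lt measurable_fst measurable_snd)) _).symm

/-- `∫ |F_η - F_{η'}|`, with the absolute value split into two truncated differences. -/
def cdfDist (η η' : Measure ℝ) : ℝ≥0∞ :=
  ∫⁻ t, (η (Iic t) - η' (Iic t) + (η' (Iic t) - η (Iic t)))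

namespace IsCoupling

variable {π : Measure (ℝ × ℝ)} {η η' : Measure ℝ}

lemma isProbabilityMeasure [IsProbabilityMeasure η] (hπ : IsCoupling π η η') :
    IsProbabilityMeasure π :=
  ⟨by rw [← preimage_univ (f := Prod.fst), ← Measure.map_apply measurable_fst .univ, hπ.1,
    measure_univ]⟩

lemma measure_fst_le (hπ : IsCoupling π η η') (t : ℝ) : π {q | q.1 ≤ t} = η (Iic t) := by
  rw [← hπ.1, Measure.map_apply measurable_fst measurableSet_Iic]; rfl

lemma measure_snd_le (hπ : IsCoupling π η η') (t : ℝ) : π {q | q.2 ≤ t} = η' (Iic t) := by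
  rw [← hπ.2, Measure.map_apply measurable_snd measurableSet_Iic]; rfl

lemma ae_fst (hπ : IsCoupling π η η') {P : ℝ → Prop} (h : ∀ᵐ x ∂η, P x) : ∀ᵐ q ∂π, P q.1 :=
  ae_of_ae_map measurable_fst.aemeasurable (hπ.1 ▸ h)

lemma ae_snd (hπ : IsCoupling π η η') {P : ℝ → Prop} (h : ∀ᵐ x ∂η', P x) :
    ∀ᵐ q ∂π, P q.2 :=
  ae_of_ae_map measurable_snd.aemeasurable (hπ.2 ▸ h)

lemma integrable_comp_fst (hπ : IsCoupling π η η') {f : ℝ → ℝ} (hf : Integrable f η) :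
    Integrable (fun q => f q.1) π :=
  (hπ.1 ▸ hf).comp_measurable measurable_fst

lemma integrable_comp_snd (hπ : IsCoupling π η η') {f : ℝ → ℝ} (hf : Integrable f η') :
    Integrable (fun q => f q.2) π :=
  (hπ.2 ▸ hf).comp_measurable measurable_snd

lemma integrable_abs_sub (hπ : IsCoupling π η η') {f g : ℝ → ℝ} (hf : Integrable f η)
    (hg : Integrable g η') : Integrable (fun q => |f q.1 - g q.2|) π :=
  ((hπ.integrable_comp_fst hf).sub (hπ.integrable_comp_snd hg)).abs

lemma integral_comp_fst (hπ : IsCoupling π η η') {f : ℝ → ℝ} (hf : AEStronglyMeasurable f η) :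
    ∫ q, f q.1 ∂π = ∫ x, f x ∂η := by
  rw [← hπ.1] at hf ⊢
  exact (integral_map measurable_fst.aemeasurable hf).symm

lemma integral_comp_snd (hπ : IsCoupling π η η') {f : ℝ → ℝ} (hf : AEStronglyMeasurable f η') :
    ∫ q, f q.2 ∂π = ∫ x, f x ∂η' := by
  rw [← hπ.2] at hf ⊢
  exact (integral_map measurable_snd.aemeasurable hf).symm

lemma abs_integral_sub_le (hπ : IsCoupling π η η') (hη : Integrable id η)
    (hη' : Integrable id η') : |∫ x, x ∂η - ∫ x, x ∂η'| ≤ ∫ q, |q.1 - q.2| ∂π := by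
  have h₁ : ∫ q, q.1 ∂π = ∫ x, x ∂η := hπ.integral_comp_fst aestronglyMeasurable_id
  have h₂ : ∫ q, q.2 ∂π = ∫ x, x ∂η' := hπ.integral_comp_snd aestronglyMeasurable_id
  have hi₁ : Integrable (fun q : ℝ × ℝ => q.1) π := hπ.integrable_comp_fst hη
  have hi₂ : Integrable (fun q : ℝ × ℝ => q.2) π := hπ.integrable_comp_snd hη'
  rw [← h₁, ← h₂, ← integral_sub hi₁ hi₂]
  exact abs_integral_le_integral_abs

lemma integral_abs_sub_le (hπ : IsCoupling π η η') (hη : Integrable id η)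
    (hη' : Integrable id η') : ∫ q, |q.1 - q.2| ∂π ≤ ∫ x, ‖x‖ ∂η + ∫ x, ‖x‖ ∂η' := by
  have h₁ : ∫ q, ‖q.1‖ ∂π = ∫ x, ‖x‖ ∂η := hπ.integral_comp_fst (by fun_prop)
  have h₂ : ∫ q, ‖q.2‖ ∂π = ∫ x, ‖x‖ ∂η' := hπ.integral_comp_snd (by fun_prop)
  have hi₁ : Integrable (fun q : ℝ × ℝ => ‖q.1‖) π := hπ.integrable_comp_fst hη.norm
  have hi₂ : Integrable (fun q : ℝ × ℝ => ‖q.2‖) π := hπ.integrable_comp_snd hη'.norm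
  rw [← h₁, ← h₂, ← integral_add hi₁ hi₂]
  exact integral_mono (hπ.integrable_abs_sub hη hη') (hi₁.add hi₂) fun q => abs_sub q.1 q.2

lemma lintegral_edist_lt_top (hπ : IsCoupling π η η') (hη : Integrable id η)
    (hη' : Integrable id η') : ∫⁻ q, edist q.1 q.2 ∂π < ∞ := by
  have hi₁ : Integrable (fun q : ℝ × ℝ => q.1) π := hπ.integrable_comp_fst hη
  have hi₂ : Integrable (fun q : ℝ × ℝ => q.2) π := hπ.integrable_comp_snd hη'
  simpa only [hasFiniteIntegral_iff_enorm, Pi.sub_apply, edist_eq_enorm_sub] using (hi₁.sub hi₂).2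

lemma cdfDist_le_lintegral_edist [IsProbabilityMeasure η] (hπ : IsCoupling π η η') :
    cdfDist η η' ≤ ∫⁻ q, edist q.1 q.2 ∂π := by
  have := hπ.isProbabilityMeasure
  rw [lintegral_edist_eq]
  refine lintegral_mono fun t => add_le_add ?_ ?_
  · rw [← hπ.measure_fst_le, ← hπ.measure_snd_le]
    exact measure_sublevel_tsub_le π Prod.fst Prod.snd t
  · rw [← hπ.measure_fst_le, ← hπ.measure_snd_le]
    exact measure_sublevel_tsub_le π Prod.snd Prod.fst t

end IsCoupling

lemma integral_abs_sub_eq_toReal (π : Measure (ℝ × ℝ)) :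
    ∫ q, |q.1 - q.2| ∂π = (∫⁻ q, edist q.1 q.2 ∂π).toReal := by
  rw [integral_eq_lintegral_of_nonneg_ae (ae_of_all _ fun _ => abs_nonneg _) (by fun_prop)]
  simp_rw [edist_dist, Real.dist_eq]

lemma Wr_nonneg (ρ : ℝ) (η η' : Measure ℝ) : 0 ≤ Wr ρ η η' :=
  Real.sInf_nonneg <| by
    rintro _ ⟨π, -, rfl⟩
    exact integral_nonneg fun _ => Real.rpow_nonneg (abs_nonneg _) _

section Comonotone

variable {η η' : Measure ℝ} [IsProbabilityMeasure η] [IsProbabilityMeasure η']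

def comonotoneCoupling (η η' : Measure ℝ) : Measure (ℝ × ℝ) :=
  lam01.map fun u => (qf η u, qf η' u)

lemma aemeasurable_qf_prod : AEMeasurable (fun u => (qf η u, qf η' u)) lam01 :=
  aemeasurable_qf.prodMk aemeasurable_qf

instance : IsProbabilityMeasure (comonotoneCoupling η η') :=
  Measure.isProbabilityMeasure_map aemeasurable_qf_prod

lemma isCoupling_comonotoneCoupling : IsCoupling (comonotoneCoupling η η') η η' :=
  ⟨by rw [comonotoneCoupling, AEMeasurable.map_map_of_aemeasurable measurable_fst.aemeasurable
      aemeasurable_qf_prod]; exact map_qf,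
    by rw [comonotoneCoupling, AEMeasurable.map_map_of_aemeasurable measurable_snd.aemeasurable
      aemeasurable_qf_prod]; exact map_qf⟩

lemma lintegral_edist_comonotoneCoupling :
    ∫⁻ q, edist q.1 q.2 ∂(comonotoneCoupling η η') = cdfDist η η' := by
  rw [lintegral_edist_eq, cdfDist]
  refine lintegral_congr fun t => ?_
  rw [comonotoneCoupling, Measure.map_apply_of_aemeasurable aemeasurable_qf_prod (by measurability),
    Measure.map_apply_of_aemeasurable aemeasurable_qf_prod (by measurability)]
  exact congrArg₂ (· + ·) (lam01_qf_le_lt_qf η' t) (lam01_qf_le_lt_qf η t)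

variable (hη : Integrable id η) (hη' : Integrable id η')
include hη hη'

lemma Wr_one_eq_cdfDist : Wr 1 η η' = (cdfDist η η').toReal := by
  simp only [Wr, Real.rpow_one, integral_abs_sub_eq_toReal]
  refine le_antisymm
    (csInf_le ⟨0, ?_⟩ ⟨_, isCoupling_comonotoneCoupling, by rw [lintegral_edist_comonotoneCoupling]⟩)
    (le_csInf ⟨_, _, isCoupling_comonotoneCoupling, rfl⟩ ?_)
  · rintro _ ⟨π, -, rfl⟩
    exact ENNReal.toReal_nonneg
  · rintro _ ⟨π, hπ, rfl⟩
    exact ENNReal.toReal_mono (hπ.lintegral_edist_lt_top hη hη').ne hπ.cdfDist_le_lintegral_edist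

lemma Wr_one_eq_integral_comonotoneCoupling :
    Wr 1 η η' = ∫ q, |q.1 - q.2| ∂(comonotoneCoupling η η') := by
  rw [Wr_one_eq_cdfDist hη hη', integral_abs_sub_eq_toReal, lintegral_edist_comonotoneCoupling]

lemma abs_integral_sub_le_Wr_one : |∫ x, x ∂η - ∫ x, x ∂η'| ≤ Wr 1 η η' := by
  rw [Wr_one_eq_integral_comonotoneCoupling hη hη']
  exact isCoupling_comonotoneCoupling.abs_integral_sub_le hη hη'

lemma Wr_one_le : Wr 1 η η' ≤ ∫ x, ‖x‖ ∂η + ∫ x, ‖x‖ ∂η' := by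
  rw [Wr_one_eq_integral_comonotoneCoupling hη hη']
  exact isCoupling_comonotoneCoupling.integral_abs_sub_le hη hη'

end Comonotone

lemma measurable_kernel_Iic {α : Type*} [MeasurableSpace α] (κ : Kernel α ℝ) [IsSFiniteKernel κ] :
    Measurable fun z : α × ℝ => κ z.1 (Iic z.2) :=
  Kernel.measurable_kernel_prodMk_left (κ := κ.comap Prod.fst measurable_fst)
    (measurableSet_le measurable_snd (measurable_snd.comp measurable_fst))

lemma measurable_cdfDist {α β : Type*} [MeasurableSpace α] [MeasurableSpace β]
    (κ : Kernel α ℝ) (κ' : Kernel β ℝ) [IsSFiniteKernel κ] [IsSFiniteKernel κ'] :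
    Measurable fun q : α × β => cdfDist (κ q.1) (κ' q.2) := by
  have h₁ : Measurable fun z : (α × β) × ℝ => κ z.1.1 (Iic z.2) :=
    (measurable_kernel_Iic κ).comp (measurable_fst.fst.prodMk measurable_snd)
  have h₂ : Measurable fun z : (α × β) × ℝ => κ' z.1.2 (Iic z.2) :=
    (measurable_kernel_Iic κ').comp (measurable_fst.snd.prodMk measurable_snd)
  exact ((h₁.sub h₂).add (h₂.sub h₁)).lintegral_prod_right'

lemma integrable_Wr_one {κ κ' : Kernel ℝ ℝ} [IsMarkovKernel κ] [IsMarkovKernel κ']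
    {ξ ξ' : Measure ℝ} {χ : Measure (ℝ × ℝ)} (hχ : IsCoupling χ ξ ξ')
    (hκ : Integrable id (κ ∘ₘ ξ)) (hκ' : Integrable id (κ' ∘ₘ ξ')) :
    Integrable (fun q => Wr 1 (κ q.1) (κ' q.2)) χ := by
  have hfin : ∀ᵐ q ∂χ, Integrable id (κ q.1) ∧ Integrable id (κ' q.2) :=
    (hχ.ae_fst (Measure.ae_integrable_of_integrable_comp hκ)).and
      (hχ.ae_snd (Measure.ae_integrable_of_integrable_comp hκ'))
  have hmeas : AEStronglyMeasurable (fun q => Wr 1 (κ q.1) (κ' q.2)) χ :=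
    (measurable_cdfDist κ κ').ennreal_toReal.aestronglyMeasurable.congr
      (hfin.mono fun q h => (Wr_one_eq_cdfDist h.1 h.2).symm)
  refine Integrable.mono'
    ((hχ.integrable_comp_fst (Measure.integrable_integral_norm_of_integrable_comp hκ)).add
      (hχ.integrable_comp_snd (Measure.integrable_integral_norm_of_integrable_comp hκ'))) hmeas ?_
  filter_upwards [hfin] with q h
  rw [Real.norm_eq_abs, abs_of_nonneg (Wr_nonneg _ _ _)]
  exact Wr_one_le h.1 h.2

theorem integral_abs_integral_sub_qf_le_lAWr_one {μ μ' : Measure ℝ} [IsProbabilityMeasure μ]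
    [IsProbabilityMeasure μ'] (hμ : Integrable id μ) (hμ' : Integrable id μ')
    {κ κ' : Kernel ℝ ℝ} [IsMarkovKernel κ] [IsMarkovKernel κ']
    (hκ : Integrable id (κ ∘ₘ lam01)) (hκ' : Integrable id (κ' ∘ₘ lam01))
    (hmart : ∀ᵐ u ∂lam01, ∫ y, y ∂κ' u = qf μ' u) :
    ∫ u in Ioo 0 1, |∫ y, y ∂κ u - qf μ u| ≤ lAWr 1 μ κ μ' κ' := by
  have hlam : Integrable id lam01 := continuous_id.integrableOn_Icc.mono_set Ioo_subset_Icc_self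
  have hmeas : AEStronglyMeasurable (fun u => |∫ y, y ∂κ u - qf μ u|) lam01 :=
    ((stronglyMeasurable_id.integral_kernel (κ := κ)).aestronglyMeasurable.sub
      aemeasurable_qf.aestronglyMeasurable).norm
  simp only [lAWr, Real.rpow_one]
  refine le_csInf ⟨_, _, isCoupling_comonotoneCoupling (η := lam01) (η' := lam01), rfl⟩ ?_
  rintro _ ⟨χ, hχ, rfl⟩
  have hgood : ∀ᵐ q ∂χ, Integrable id (κ q.1) ∧ Integrable id (κ' q.2) ∧
      ∫ y, y ∂κ' q.2 = qf μ' q.2 :=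
    (hχ.ae_fst (Measure.ae_integrable_of_integrable_comp hκ)).and
      ((hχ.ae_snd (Measure.ae_integrable_of_integrable_comp hκ')).and (hχ.ae_snd hmart))
  calc ∫ u in Ioo 0 1, |∫ y, y ∂κ u - qf μ u| = ∫ q, |∫ y, y ∂κ q.1 - qf μ q.1| ∂χ :=
        (hχ.integral_comp_fst hmeas).symm
    _ ≤ ∫ q, (|q.1 - q.2| + |qf μ q.1 - qf μ' q.2| + Wr 1 (κ q.1) (κ' q.2)) ∂χ := by
      refine integral_mono_of_nonneg (ae_of_all _ fun _ => abs_nonneg _)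
        (((hχ.integrable_abs_sub hlam hlam).add (hχ.integrable_abs_sub (integrable_qf hμ)
          (integrable_qf hμ'))).add (integrable_Wr_one hχ hκ hκ')) ?_
      filter_upwards [hgood] with q ⟨hκq, hκ'q, hmartq⟩
      have hW := abs_integral_sub_le_Wr_one hκq hκ'q
      rw [hmartq] at hW
      have htri := abs_sub_le (∫ y, y ∂κ q.1) (qf μ' q.2) (qf μ q.1)
      rw [abs_sub_comm (qf μ' q.2)] at htri
      linarith [abs_nonneg (q.1 - q.2)]

theorem stmt3_general
    (μ ν : Measure ℝ) [IsProbabilityMeasure μ]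
    (hμ1 : Integrable (fun x => |x|) μ) (hν1 : Integrable (fun x => |x|) ν)
    (p : ℝ → Measure ℝ) (hp : IsLiftedCoupling μ ν p)
    (m : ℝ → Measure ℝ) (hm : IsLiftedMartingale μ ν m) :
    ∫ u in Set.Ioo (0 : ℝ) 1, |(∫ y, y ∂(p u)) - qf μ u| ≤ lAWr 1 μ p μ m := by
  obtain ⟨hpm, hpprob, hpν⟩ := hp
  obtain ⟨⟨hmm, hmprob, hmν⟩, hmart⟩ := hm
  have hμ : Integrable id μ := (integrable_norm_iff aestronglyMeasurable_id).1 hμ1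
  have hν : Integrable id ν := (integrable_norm_iff aestronglyMeasurable_id).1 hν1
  have : IsMarkovKernel (⟨p, hpm⟩ : Kernel ℝ ℝ) := ⟨hpprob⟩
  have : IsMarkovKernel (⟨m, hmm⟩ : Kernel ℝ ℝ) := ⟨hmprob⟩
  exact integral_abs_integral_sub_qf_le_lAWr_one (κ := ⟨p, hpm⟩) (κ' := ⟨m, hmm⟩) hμ hμ
    (hpν ▸ hν) (hmν ▸ hν) hmart

/-- Lemma `lemEpsilon`: for `μ ≤_cx ν` and any lifted coupling with kernel `p`
between `μ` and `ν`, the lifted adapted Wasserstein distance `ÂW₁` to any lifted martingale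
coupling is bounded below by `∫_{(0,1)} |∫ y p_u(dy) - F_μ^{-1}(u)| du`. -/
theorem stmt3
    (μ ν : Measure ℝ) [IsProbabilityMeasure μ] [IsProbabilityMeasure ν]
    (hμ1 : Integrable (fun x => |x|) μ) (hν1 : Integrable (fun x => |x|) ν)
    (hcx : ConvexOrder μ ν)
    (p : ℝ → Measure ℝ) (hp : IsLiftedCoupling μ ν p)
    (m : ℝ → Measure ℝ) (hm : IsLiftedMartingale μ ν m) :
    ∫ u in Set.Ioo (0 : ℝ) 1, |(∫ y, y ∂(p u)) - qf μ u| ≤ lAWr 1 μ p μ m :=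
  stmt3_general μ ν hμ1 hν1 p hp m hm
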